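/- A basis partition with Durfee square size k ≥ 1 and successive rank vector (r_1, ..., r_k) is complete if and only if r_j ≠ r_{j+1} for all j = 1, 2, ..., k−1. -/

import Mathlib

open Finset
open scoped Classical

namespace BasisPartitions

/-! ### Ordinary partitions -/

/-- The parts of a partition, listed in weakly decreasing order. -/
def sparts {n : ℕ} (π : n.Partition) : List ℕ := π.parts.sort (· ≥ ·)

/-- `conj L j` is the number of parts that are `≥ j`, i.e. the `j`-th part of the
conjugate partition (for `j ≥ 1`). -/
def conj (L : List ℕ) (j : ℕ) : ℕ := L.countP (fun b => j ≤ b)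

/-- The Durfee square size: the largest `k` such that the `k`-th part is `≥ k`. -/
def durfee (L : List ℕ) : ℕ := (List.range L.length).countP (fun i => i + 1 ≤ L.getD i 0)

/-- The `(i+1)`-st successive rank `r_{i+1} = b_{i+1} - c_{i+1}` (0-indexed `i`). -/
def rank (L : List ℕ) (i : ℕ) : ℤ := (L.getD i 0 : ℤ) - (conj L (i + 1) : ℤ)

/-- The successive rank vector `(r_1, ..., r_k)` where `k` is the Durfee square size. -/
def ranks (L : List ℕ) : List ℤ := (List.range (durfee L)).map (rank L)

/-- A basis partition: the partitioned number is minimal among all partitions having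
the same successive rank vector. -/
def IsBasis {n : ℕ} (π : n.Partition) : Prop :=
  ∀ (m : ℕ) (π' : m.Partition), ranks (sparts π') = ranks (sparts π) → n ≤ m

/-- The signature: the number of distinct part sizes below the Durfee square. -/
def sig (L : List ℕ) : ℕ := ((L.drop (durfee L)).dedup).length

/-- `b(n;k)`: the number of basis partitions of `n` with Durfee square size `k`. -/
noncomputable def bCount (n k : ℕ) : ℕ :=
  Nat.card {π : n.Partition // IsBasis π ∧ durfee (sparts π) = k}

/-- `b(n,k,s)`: the number of basis partitions of `n` with Durfee square size `k`
and signature `s`. -/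
noncomputable def bCount3 (n k s : ℕ) : ℕ :=
  Nat.card {π : n.Partition // IsBasis π ∧ durfee (sparts π) = k ∧ sig (sparts π) = s}

/-- `B(n;j)`: the number of basis partitions of `n` with signature `j`. -/
noncomputable def BCount (n j : ℕ) : ℕ :=
  Nat.card {π : n.Partition // IsBasis π ∧ sig (sparts π) = j}

/-- Rogers–Ramanujan condition: exactly `k` parts, consecutive gaps `≥ 2`, last part `≥ 1`. -/
def RR (L : List ℕ) (k : ℕ) : Prop :=
  L.length = k ∧ (∀ i, i + 1 < k → L.getD (i + 1) 0 + 2 ≤ L.getD i 0) ∧ 1 ≤ L.getD (k - 1) 0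

/-- `t(π)` for a Rogers–Ramanujan partition: the number of gaps `> 2`, plus 1 if the
last part is `> 1`. -/
def tRR (L : List ℕ) (k : ℕ) : ℕ :=
  ((Finset.range (k - 1)).filter (fun i => L.getD (i + 1) 0 + 2 < L.getD i 0)).card +
    (if 1 < L.getD (k - 1) 0 then 1 else 0)

/-- Primary condition: exactly `k` parts, each part `≥ k`. -/
def Primary (L : List ℕ) (k : ℕ) : Prop := L.length = k ∧ ∀ x ∈ L, k ≤ x

/-- `t(π)` for a primary partition: the number of strict descents, plus 1 if the
last part is `> k`. -/
def tP (L : List ℕ) (k : ℕ) : ℕ :=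
  ((Finset.range (k - 1)).filter (fun i => L.getD (i + 1) 0 < L.getD i 0)).card +
    (if k < L.getD (k - 1) 0 then 1 else 0)

/-- A complete basis partition: every `j` with `1 ≤ j ≤ k-1` occurs as a part of `π_b`
(a row below the Durfee square) or as a part of `π_r` (a column length strictly to the
right of the Durfee square). -/
def IsComplete {n : ℕ} (π : n.Partition) : Prop :=
  ∀ j : ℕ, 1 ≤ j → j < durfee (sparts π) →
    j ∈ (sparts π).drop (durfee (sparts π)) ∨
      ∃ c : ℕ, durfee (sparts π) < c ∧ conj (sparts π) c = j

/-- `b_c(n)`: the number of complete basis partitions of `n`. -/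
noncomputable def bc (n : ℕ) : ℕ := Nat.card {π : n.Partition // IsBasis π ∧ IsComplete π}

/-! ### Partitions with non-repeating odd parts and their 2-modular graphs -/

/-- Partitions with non-repeating (distinct) odd parts. -/
def Pod {n : ℕ} (π : n.Partition) : Prop := ∀ x, Odd x → π.parts.count x ≤ 1

/-- The size (sum of entries) of the `c`-th column (1-indexed) of the 2-modular graph. -/
def mcolSize (L : List ℕ) (c : ℕ) : ℕ :=
  (L.map (fun x => if 2 * c ≤ x then 2 else if x = 2 * c - 1 then 1 else 0)).sum

/-- The length (number of entries) of the `c`-th column (1-indexed) of the 2-modular graph. -/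
def mcolLen (L : List ℕ) (c : ℕ) : ℕ := L.countP (fun x => 2 * c - 1 ≤ x)

/-- The number of entries in a row of the 2-modular graph recording the part `x`,
namely `⌈x/2⌉`. -/
def mrowLen (x : ℕ) : ℕ := (x + 1) / 2

/-- The 2-modular Durfee square size: the largest `k` with `⌈b_k/2⌉ ≥ k`. -/
def mdurfee (L : List ℕ) : ℕ := (List.range L.length).countP (fun i => 2 * i + 1 ≤ L.getD i 0)

/-- The `(i+1)`-st 2-modular successive rank: (size of row `i+1`) − (size of column `i+1`). -/
def mrank (L : List ℕ) (i : ℕ) : ℤ := (L.getD i 0 : ℤ) - (mcolSize L (i + 1) : ℤ)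

/-- The 2-modular successive rank vector. -/
def mranks (L : List ℕ) : List ℤ := (List.range (mdurfee L)).map (mrank L)

/-- A minimal basis partition in `P_{o,d}`: the partitioned number is minimal among all
partitions with non-repeating odd parts having the same 2-modular successive rank vector. -/
def MinBasis {n : ℕ} (μ : n.Partition) : Prop :=
  Pod μ ∧ ∀ (m : ℕ) (μ' : m.Partition), Pod μ' →
    mranks (sparts μ') = mranks (sparts μ) → n ≤ m

/-- A basis partition in `P_{o,d}`: no row of the 2-modular graph strictly below the Durfee
square has size equal to the size of a column strictly to the right of the Durfee square. -/
def PodBasis {n : ℕ} (π : n.Partition) : Prop :=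
  Pod π ∧ ∀ i, mdurfee (sparts π) ≤ i → i < (sparts π).length →
    ∀ c, mdurfee (sparts π) < c → mcolSize (sparts π) c ≠ (sparts π).getD i 0

/-- The signature of a basis partition in `P_{o,d}`: the number of distinct sizes among the
rows of the 2-modular graph strictly below the Durfee square. -/
def msig (L : List ℕ) : ℕ := ((L.drop (mdurfee L)).dedup).length

/-- The ℓ-signature: the number of distinct lengths among the rows of the 2-modular
graph strictly below the Durfee square. -/
def lsig (L : List ℕ) : ℕ := (((L.drop (mdurfee L)).map mrowLen).dedup).length

/-- `b(n;j)` for `P_{o,d}`: the number of basis partitions of `n` in `P_{o,d}` with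
signature `j`. -/
noncomputable def podB (n j : ℕ) : ℕ := Nat.card {π : n.Partition // PodBasis π ∧ msig (sparts π) = j}

/-- The number of odd parts. -/
def numOdd (L : List ℕ) : ℕ := L.countP (fun x => x % 2 = 1)

/-- A special partition: distinct parts with consecutive differences `≥ 4`, where a
difference equal to `4` is permitted only when both parts are even. -/
def Special (L : List ℕ) : Prop :=
  ∀ i, i + 1 < L.length →
    L.getD (i + 1) 0 + 4 ≤ L.getD i 0 ∧
      (L.getD i 0 = L.getD (i + 1) 0 + 4 → Even (L.getD i 0) ∧ Even (L.getD (i + 1) 0))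

/-- The `i`-th part of a special partition, with the convention that the part just after
the last one is `-2`. -/
def hpart (L : List ℕ) (i : ℕ) : ℤ := if i < L.length then (L.getD i 0 : ℤ) else -2

/-- `ℓ(π)`: the number of gaps `> 4` in a special partition, with the convention
`h_{k+1} = -2`. -/
def ell (L : List ℕ) : ℕ :=
  ((Finset.range L.length).filter (fun i => 4 < hpart L i - hpart L (i + 1))).card


/-!
Write `b_j` for the parts of `π` and `c_j` for those of its conjugate, so that `c_j - c_{j+1}` is
the multiplicity of `j` and `r_j - r_{j+1} = (b_j - b_{j+1}) - (c_j - c_{j+1})`. For `j < k` the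
rows `b_1, …, b_k` are at least `k`, so `j` is a part of `π_b` iff it is a part of `π`, and `j`
is a column length of `π_r` iff `b_j > b_{j+1}`. Hence `r_j = r_{j+1}` when `j` occurs in
neither `π_b` nor `π_r`, and `r_j ≠ r_{j+1}` when it occurs in exactly one of them. In a basis
partition `j` never occurs in both: deleting a row of length `j` from `π_b` and a column of
length `j` from `π_r` keeps every successive rank and lowers `σ(π)` by `2j`.
-/

theorem lt_countP_range_iff {p : ℕ → Prop} [DecidablePred p] (hp : ∀ i j, j ≤ i → p i → p j)
    (n i : ℕ) : i < (List.range n).countP (fun j => decide (p j)) ↔ i < n ∧ p i := by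
  induction n generalizing i with
  | zero => simp
  | succ n ih =>
    rw [List.range_succ, List.countP_append, List.countP_singleton]
    by_cases hn : p n
    · have hall : (List.range n).countP (fun j => decide (p j)) = n := by
        rw [List.countP_eq_length.mpr fun j hj =>
          decide_eq_true (hp n j (List.mem_range.mp hj).le hn), List.length_range]
      simp only [hall, hn, decide_true, if_true]
      exact ⟨fun h => ⟨h, hp n i (by omega) hn⟩, And.left⟩
    · simp only [hn, decide_false, Bool.false_eq_true, if_false, add_zero, ih]
      constructor
      · exact fun ⟨h, h'⟩ => ⟨by omega, h'⟩
      · rintro ⟨h, h'⟩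
        exact ⟨lt_of_le_of_ne (Nat.lt_succ_iff.mp h) (by rintro rfl; exact hn h'), h'⟩

theorem getD_drop (L : List ℕ) (m t : ℕ) : (L.drop m).getD t 0 = L.getD (m + t) 0 := by
  simp only [List.getD_eq_getElem?_getD, List.getElem?_drop]

theorem exists_getD_eq_of_mem_take {L : List ℕ} {m x : ℕ} (hx : x ∈ L.take m) :
    ∃ t < m, L.getD t 0 = x := by
  obtain ⟨t, ht, rfl⟩ := List.mem_iff_getElem.mp hx
  rw [List.length_take] at ht
  refine ⟨t, by omega, ?_⟩
  simp [List.getD_eq_getElem?_getD, List.getElem?_eq_getElem (by omega : t < L.length)]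

theorem exists_getD_eq_of_mem_drop {L : List ℕ} {m x : ℕ} (hx : x ∈ L.drop m) :
    ∃ t, m ≤ t ∧ L.getD t 0 = x := by
  obtain ⟨t, ht, rfl⟩ := List.mem_iff_getElem.mp hx
  refine ⟨m + t, by omega, ?_⟩
  rw [← getD_drop]
  simp [List.getD_eq_getElem?_getD, List.getElem?_eq_getElem ht]

theorem getD_erase_of_forall_ne {l : List ℕ} {a t : ℕ} (h : ∀ s ≤ t, l.getD s 0 ≠ a) :
    (l.erase a).getD t 0 = l.getD t 0 := by
  induction l generalizing t with
  | nil => rfl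
  | cons b l ih =>
    have hb : b ≠ a := h 0 (Nat.zero_le _)
    rw [List.erase_cons_tail (by simpa using hb)]
    cases t with
    | zero => rfl
    | succ t => exact ih fun s hs => h (s + 1) (by omega)

theorem sum_map_pred_add_length {l : List ℕ} (hpos : ∀ x ∈ l, 0 < x) :
    (l.map (· - 1)).sum + l.length = l.sum := by
  induction l with
  | nil => rfl
  | cons a t ih =>
    have ha := hpos a List.mem_cons_self
    have ht := ih fun x hx => hpos x (List.mem_cons_of_mem a hx)
    simp only [List.map_cons, List.sum_cons, List.length_cons]
    omega

theorem conj_take_add_conj_drop (L : List ℕ) (m j : ℕ) :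
    conj (L.take m) j + conj (L.drop m) j = conj L j := by
  rw [conj, conj, ← List.countP_append, List.take_append_drop, conj]

theorem conj_eq_conj_succ_add_count (L : List ℕ) (j : ℕ) :
    conj L j = conj L (j + 1) + L.count j := by
  induction L with
  | nil => rfl
  | cons a t ih =>
    simp only [conj, List.countP_cons, List.count_cons, beq_iff_eq, decide_eq_true_eq] at ih ⊢
    split_ifs <;> omega

theorem durfee_le_length (L : List ℕ) : durfee L ≤ L.length :=
  List.countP_le_length.trans_eq List.length_range

section SortedList

variable {L : List ℕ}

theorem getD_antitone (hs : L.Pairwise (· ≥ ·)) {i j : ℕ} (hij : i ≤ j) :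
    L.getD j 0 ≤ L.getD i 0 := by
  rcases lt_or_ge j L.length with hj | hj
  · rcases hij.eq_or_lt with rfl | hij
    · rfl
    · simp only [List.getD_eq_getElem?_getD, List.getElem?_eq_getElem hj,
        List.getElem?_eq_getElem (hij.trans hj), Option.getD_some]
      exact List.pairwise_iff_getElem.mp hs i j _ hj hij
  · rw [List.getD_eq_default _ _ hj]
    exact Nat.zero_le _

theorem getD_le_of_mem_take (hs : L.Pairwise (· ≥ ·)) {i x : ℕ} (hx : x ∈ L.take (i + 1)) :
    L.getD i 0 ≤ x := by
  obtain ⟨t, ht, rfl⟩ := exists_getD_eq_of_mem_take hx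
  exact getD_antitone hs (by omega)

theorem le_getD_of_mem_drop (hs : L.Pairwise (· ≥ ·)) {m x : ℕ} (hx : x ∈ L.drop m) :
    x ≤ L.getD m 0 := by
  obtain ⟨t, ht, rfl⟩ := exists_getD_eq_of_mem_drop hx
  exact getD_antitone hs ht

theorem lt_conj_iff (hs : L.Pairwise (· ≥ ·)) {c : ℕ} (hc : 1 ≤ c) (i : ℕ) :
    i < conj L c ↔ c ≤ L.getD i 0 := by
  induction L generalizing i with
  | nil => simp [conj]; omega
  | cons a t ih =>
    by_cases ha : c ≤ a
    · have hconj : conj (a :: t) c = conj t c + 1 := by simp [conj, ha]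
      cases i <;> simp [hconj, ha, ih hs.of_cons]
    · have hconj : conj (a :: t) c = 0 := by
        simp only [conj, List.countP_eq_zero, decide_eq_true_eq]
        intro x hx hcx
        rcases List.mem_cons.mp hx with rfl | hx
        · exact ha hcx
        · exact ha (hcx.trans (List.rel_of_pairwise_cons hs hx))
      have hai := getD_antitone hs (Nat.zero_le i)
      simp only [List.getD_cons_zero] at hai
      simp only [hconj, Nat.not_lt_zero, false_iff]
      omega

theorem conj_eq_succ_iff (hs : L.Pairwise (· ≥ ·)) {c : ℕ} (hc : 1 ≤ c) (i : ℕ) :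
    conj L c = i + 1 ↔ L.getD (i + 1) 0 < c ∧ c ≤ L.getD i 0 := by
  have h₀ := lt_conj_iff hs hc i
  have h₁ := lt_conj_iff hs hc (i + 1)
  constructor
  · intro h; omega
  · rintro ⟨h, h'⟩; omega

theorem rank_eq_rank_succ_iff (hs : L.Pairwise (· ≥ ·)) (i : ℕ) :
    rank L i = rank L (i + 1) ↔ L.getD i 0 = L.getD (i + 1) 0 + L.count (i + 1) := by
  have := getD_antitone hs (Nat.le_add_right i 1)
  rw [rank, rank, conj_eq_conj_succ_add_count L (i + 1)]
  push_cast
  omega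

theorem lt_durfee_iff (hs : L.Pairwise (· ≥ ·)) (i : ℕ) :
    i < durfee L ↔ i + 1 ≤ L.getD i 0 := by
  rw [durfee, lt_countP_range_iff fun i j hji h => by have := getD_antitone hs hji; omega]
  refine ⟨And.right, fun h => ⟨?_, h⟩⟩
  by_contra hi
  rw [List.getD_eq_default _ _ (not_lt.mp hi)] at h
  omega

theorem durfee_le_getD (hs : L.Pairwise (· ≥ ·)) {t : ℕ} (ht : t < durfee L) :
    durfee L ≤ L.getD t 0 := by
  have hlast := (lt_durfee_iff hs (durfee L - 1)).mp (by omega)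
  have := getD_antitone hs (show t ≤ durfee L - 1 by omega)
  omega

theorem durfee_le_of_mem_take (hs : L.Pairwise (· ≥ ·)) {m x : ℕ} (hm : m ≤ durfee L)
    (hx : x ∈ L.take m) : durfee L ≤ x := by
  obtain ⟨t, ht, rfl⟩ := exists_getD_eq_of_mem_take hx
  exact durfee_le_getD hs (by omega)

theorem mem_drop_durfee_iff (hs : L.Pairwise (· ≥ ·)) {j : ℕ} (hj : j < durfee L) :
    j ∈ L.drop (durfee L) ↔ j ∈ L := by
  refine ⟨List.mem_of_mem_drop, fun h => ?_⟩
  rw [← List.take_append_drop (durfee L) L, List.mem_append] at h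
  exact h.resolve_left fun h' => by have := durfee_le_of_mem_take hs le_rfl h'; omega

theorem mem_drop_self_of_lt_durfee (hs : L.Pairwise (· ≥ ·)) {m : ℕ} (hm : m < durfee L)
    (hmem : m ∈ L) : m ∈ L.drop m := by
  rw [← List.take_append_drop m L, List.mem_append] at hmem
  exact hmem.resolve_left fun h => by have := durfee_le_of_mem_take hs hm.le h; omega

theorem exists_conj_eq_succ_iff (hs : L.Pairwise (· ≥ ·)) {i : ℕ} (hi : i + 1 < durfee L) :
    (∃ c, durfee L < c ∧ conj L c = i + 1) ↔ L.getD (i + 1) 0 < L.getD i 0 := by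
  constructor
  · rintro ⟨c, hkc, hc⟩
    have := (conj_eq_succ_iff hs (by omega) i).mp hc
    omega
  · intro h
    have := durfee_le_getD hs hi
    exact ⟨L.getD (i + 1) 0 + 1, by omega, (conj_eq_succ_iff hs (by omega) i).mpr ⟨by omega, h⟩⟩

theorem durfee_le_durfee_of_conj_le {L' : List ℕ} (hs : L.Pairwise (· ≥ ·))
    (hs' : L'.Pairwise (· ≥ ·)) (h : ∀ j, conj L' j ≤ conj L j) : durfee L' ≤ durfee L := by
  by_contra! hlt
  have h' := (lt_conj_iff hs' (Nat.succ_pos _) _).mpr ((lt_durfee_iff hs' _).mp hlt)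
  have := (lt_durfee_iff hs _).mpr ((lt_conj_iff hs (Nat.succ_pos _) _).mp
    (h'.trans_le (h (durfee L + 1))))
  omega

end SortedList

section Sparts

variable {n : ℕ}

theorem pairwise_sparts (π : n.Partition) : (sparts π).Pairwise (· ≥ ·) :=
  Multiset.pairwise_sort _ _

theorem pos_of_mem_sparts {π : n.Partition} {x : ℕ} (hx : x ∈ sparts π) : 0 < x :=
  π.parts_pos ((Multiset.mem_sort _).mp hx)

theorem sum_sparts (π : n.Partition) : (sparts π).sum = n := by
  rw [← Multiset.sum_coe, sparts, Multiset.sort_eq, π.parts_sum]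

theorem exists_sparts_eq {L : List ℕ} (hs : L.Pairwise (· ≥ ·)) (hpos : ∀ x ∈ L, 0 < x) :
    ∃ π : L.sum.Partition, sparts π = L := by
  refine ⟨⟨L, fun hx => hpos _ (Multiset.mem_coe.mp hx), Multiset.sum_coe L⟩, ?_⟩
  refine List.Perm.eq_of_pairwise' (Multiset.pairwise_sort _ _) hs ?_
  rw [← Multiset.coe_eq_coe, sparts, Multiset.sort_eq]

end Sparts

/-- For `m` below the Durfee size with `b_m > b_{m+1}` (1-indexed), shortening the first `m`
rows removes a column of length `m` to the right of the Durfee square, and erasing a part `m`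
removes a row of length `m` below it. -/
def eraseRowAndColumn (L : List ℕ) (m : ℕ) : List ℕ :=
  (L.take m).map (· - 1) ++ (L.drop m).erase m

section EraseRowAndColumn

variable {L : List ℕ} {i : ℕ}

theorem pairwise_eraseRowAndColumn (hs : L.Pairwise (· ≥ ·))
    (hstep : L.getD (i + 1) 0 < L.getD i 0) :
    (eraseRowAndColumn L (i + 1)).Pairwise (· ≥ ·) := by
  rw [eraseRowAndColumn, List.pairwise_append]
  refine ⟨(hs.sublist (List.take_sublist _ _)).map _ fun a b h => Nat.sub_le_sub_right h 1,
    (hs.sublist (List.drop_sublist _ _)).sublist List.erase_sublist, ?_⟩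
  intro a ha b hb
  obtain ⟨x, hx, rfl⟩ := List.mem_map.mp ha
  have := getD_le_of_mem_take hs hx
  have := le_getD_of_mem_drop hs (List.mem_of_mem_erase hb)
  omega

theorem pos_of_mem_eraseRowAndColumn (hs : L.Pairwise (· ≥ ·)) (hpos : ∀ x ∈ L, 0 < x)
    (hi : i + 1 < durfee L) (hstep : L.getD (i + 1) 0 < L.getD i 0) :
    ∀ x ∈ eraseRowAndColumn L (i + 1), 0 < x := by
  intro x hx
  rcases List.mem_append.mp hx with hx | hx
  · obtain ⟨y, hy, rfl⟩ := List.mem_map.mp hx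
    have := getD_le_of_mem_take hs hy
    have := durfee_le_getD hs hi
    omega
  · exact hpos x (List.mem_of_mem_drop (List.mem_of_mem_erase hx))

theorem sum_eraseRowAndColumn (hpos : ∀ x ∈ L, 0 < x) {m : ℕ} (hmem : m ∈ L.drop m) :
    (eraseRowAndColumn L m).sum + 2 * m = L.sum := by
  have hlen : (L.take m).length = m := by
    have := List.length_pos_of_mem hmem
    rw [List.length_drop] at this
    rw [List.length_take]
    omega
  have hT := sum_map_pred_add_length (l := L.take m) fun x hx => hpos x (List.mem_of_mem_take hx)
  have hR := List.sum_erase hmem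
  conv_rhs => rw [← List.take_append_drop m L]
  rw [eraseRowAndColumn, List.sum_append, List.sum_append]
  omega

theorem conj_eraseRowAndColumn_le (L : List ℕ) (m j : ℕ) :
    conj (eraseRowAndColumn L m) j ≤ conj L j := by
  rw [← conj_take_add_conj_drop L m, eraseRowAndColumn, conj, List.countP_append]
  refine Nat.add_le_add ?_ List.erase_sublist.countP_le
  rw [List.countP_map]
  exact List.countP_mono_left fun x _ h => by
    simp only [Function.comp_apply, decide_eq_true_eq] at h ⊢
    omega

theorem getD_eraseRowAndColumn (hs : L.Pairwise (· ≥ ·)) {m t : ℕ} (hm : m < durfee L)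
    (ht : t < durfee L) :
    (eraseRowAndColumn L m).getD t 0 + (if t < m then 1 else 0) = L.getD t 0 := by
  have hlen : ((L.take m).map (· - 1)).length = m := by
    have := durfee_le_length L
    simp only [List.length_map, List.length_take]
    omega
  have hLt := durfee_le_getD hs ht
  rw [eraseRowAndColumn]
  split_ifs with htm
  · have htL : t < L.length := (durfee_le_length L).trans_lt' ht
    rw [List.getD_append _ _ _ _ (by omega)]
    simp only [List.getD_eq_getElem?_getD, List.getElem?_map, List.getElem?_take_of_lt htm,
      List.getElem?_eq_getElem htL, Option.map_some, Option.getD_some] at hLt ⊢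
    omega
  · rw [List.getD_append_right _ _ _ _ (by omega), hlen, getD_erase_of_forall_ne, getD_drop,
      Nat.add_sub_cancel' (by omega), add_zero]
    intro s hs'
    have := durfee_le_getD hs (t := m + s) (by omega)
    rw [getD_drop]
    omega

theorem conj_eraseRowAndColumn (hs : L.Pairwise (· ≥ ·)) (hi : i + 1 < durfee L)
    (hstep : L.getD (i + 1) 0 < L.getD i 0) (hmem : i + 1 ∈ L) {j : ℕ} (hj : j ≤ durfee L) :
    conj (eraseRowAndColumn L (i + 1)) j + (if j ≤ i + 1 then 1 else 0) = conj L j := by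
  have hT : conj ((L.take (i + 1)).map (· - 1)) j = conj (L.take (i + 1)) j := by
    rw [conj, conj, List.countP_map]
    refine List.countP_congr fun x hx => ?_
    have := getD_le_of_mem_take hs hx
    have := durfee_le_getD hs hi
    simp only [Function.comp_apply, decide_eq_true_eq]
    omega
  have hR : conj ((L.drop (i + 1)).erase (i + 1)) j + (if j ≤ i + 1 then 1 else 0) =
      conj (L.drop (i + 1)) j := by
    rw [conj, conj, (List.perm_cons_erase (mem_drop_self_of_lt_durfee hs hi hmem)).countP_eq,
      List.countP_cons]
    simp only [decide_eq_true_eq]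
  rw [← conj_take_add_conj_drop L (i + 1), ← hT, ← hR, eraseRowAndColumn, conj, conj, conj,
    List.countP_append]
  omega

theorem durfee_eraseRowAndColumn (hs : L.Pairwise (· ≥ ·)) (hi : i + 1 < durfee L)
    (hstep : L.getD (i + 1) 0 < L.getD i 0) :
    durfee (eraseRowAndColumn L (i + 1)) = durfee L := by
  have hs' := pairwise_eraseRowAndColumn hs hstep
  refine le_antisymm (durfee_le_durfee_of_conj_le hs hs' (conj_eraseRowAndColumn_le L _)) ?_
  have hlast := getD_eraseRowAndColumn hs hi (t := durfee L - 1) (by omega)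
  have := durfee_le_getD hs (t := durfee L - 1) (by omega)
  have := getD_antitone hs (show i ≤ durfee L - 1 by omega)
  have := (lt_durfee_iff hs' (durfee L - 1)).mpr (by split_ifs at hlast <;> omega)
  omega

theorem ranks_eraseRowAndColumn (hs : L.Pairwise (· ≥ ·)) (hi : i + 1 < durfee L)
    (hstep : L.getD (i + 1) 0 < L.getD i 0) (hmem : i + 1 ∈ L) :
    ranks (eraseRowAndColumn L (i + 1)) = ranks L := by
  rw [ranks, ranks, durfee_eraseRowAndColumn hs hi hstep]
  refine List.map_congr_left fun t ht => ?_
  have ht := List.mem_range.mp ht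
  have hrow := getD_eraseRowAndColumn hs hi ht
  have hcol := conj_eraseRowAndColumn hs hi hstep hmem (j := t + 1) ht
  rw [rank, rank]
  split_ifs at hrow hcol <;> omega

end EraseRowAndColumn

theorem IsBasis.succ_notMem_sparts {n : ℕ} {π : n.Partition} (hb : IsBasis π) {i : ℕ}
    (hi : i + 1 < durfee (sparts π))
    (hstep : (sparts π).getD (i + 1) 0 < (sparts π).getD i 0) : i + 1 ∉ sparts π := by
  intro hmem
  have hs := pairwise_sparts π
  obtain ⟨π', hπ'⟩ := exists_sparts_eq (pairwise_eraseRowAndColumn hs hstep)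
    (pos_of_mem_eraseRowAndColumn hs (fun _ => pos_of_mem_sparts) hi hstep)
  have hle := hb _ π' (by rw [hπ', ranks_eraseRowAndColumn hs hi hstep hmem])
  have hsum := sum_eraseRowAndColumn (fun _ => pos_of_mem_sparts)
    (mem_drop_self_of_lt_durfee hs (by omega) hmem)
  rw [sum_sparts] at hsum
  omega

theorem statement11_general {n : ℕ} (π : n.Partition) (hb : IsBasis π) :
    IsComplete π ↔
      ∀ i : ℕ, i + 1 < durfee (sparts π) →
        rank (sparts π) i ≠ rank (sparts π) (i + 1) := by
  have hs := pairwise_sparts π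
  constructor
  · intro hc i hi heq
    rw [rank_eq_rank_succ_iff hs] at heq
    have hboth := hc (i + 1) (by omega) hi
    rw [mem_drop_durfee_iff hs (by omega), exists_conj_eq_succ_iff hs hi,
      ← List.count_pos_iff] at hboth
    exact hb.succ_notMem_sparts hi (by omega) (List.count_pos_iff.mp (by omega))
  · intro hr j hj hjk
    obtain ⟨i, rfl⟩ : ∃ i, j = i + 1 := ⟨j - 1, by omega⟩
    rw [mem_drop_durfee_iff hs hjk, exists_conj_eq_succ_iff hs hjk, ← List.count_pos_iff]
    have := (rank_eq_rank_succ_iff hs i).not.mp (hr i hjk)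
    have := getD_antitone hs (Nat.le_add_right i 1)
    omega

theorem statement11 {n : ℕ} (π : n.Partition) (hb : IsBasis π)
    (hk : 1 ≤ durfee (sparts π)) :
    IsComplete π ↔
      ∀ i : ℕ, i + 1 < durfee (sparts π) →
        rank (sparts π) i ≠ rank (sparts π) (i + 1) :=
  statement11_general π hb

end BasisPartitions
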